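/- Let Λ be a linear trace-preserving positive map on 4×4 matrices that maps separable states to separable states. If for λ ∈ (1/2,1] the equation λΛ(Φ₁) + (1−λ)Λ(|01⟩⟨01|) = λΦ₁ + (1−λ)Φ₃ holds, then tr(Φ₃Λ(Φ₁)) ≥ (1−λ)/(2λ). -/

import Mathlib

/-! Applying `tr(Φ₃ ·)` to the hypothesis, and using `tr(Φ₃Φ₁) = 0`, `tr(Φ₃Φ₃) = 1`, gives
`λ tr(Φ₃Λ(Φ₁)) + (1 - λ) tr(Φ₃Λ(|01⟩⟨01|)) = 1 - λ`. Since `Λ(|01⟩⟨01|)` is separable, its overlap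
with `Φ₃` is at most `1/2`: for a product vector `ψ ⊗ χ` the overlap is `|ψ₀χ₁ + ψ₁χ₀|² / 2`, and
`|ψ₀χ₁ + ψ₁χ₀| ≤ 1` by Cauchy–Schwarz. -/

open Matrix Complex BigOperators
open scoped ComplexOrder

noncomputable section

/-- Standard basis ket of ℂ⁴ -/
def ket (k : Fin 4) : Fin 4 → ℂ := fun j => if j = k then 1 else 0

/-- Tensor product of two qubit vectors, with |ij⟩ ↦ index 2i+j -/
def tens (ψ χ : Fin 2 → ℂ) : Fin 4 → ℂ :=
  ![ψ 0 * χ 0, ψ 0 * χ 1, ψ 1 * χ 0, ψ 1 * χ 1]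

/-- Outer product |v⟩⟨v| -/
def proj (v : Fin 4 → ℂ) : Matrix (Fin 4) (Fin 4) ℂ :=
  Matrix.of fun i j => v i * star (v j)

/-- A qubit vector is a unit vector -/
def unit2 (ψ : Fin 2 → ℂ) : Prop := ∑ j, Complex.normSq (ψ j) = 1

/-- The four Bell vectors -/
def Bell : Fin 4 → (Fin 4 → ℂ) :=
  ![![1 / (Real.sqrt 2 : ℂ), 0, 0, 1 / (Real.sqrt 2 : ℂ)],
    ![1 / (Real.sqrt 2 : ℂ), 0, 0, -(1 / (Real.sqrt 2 : ℂ))],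
    ![0, 1 / (Real.sqrt 2 : ℂ), 1 / (Real.sqrt 2 : ℂ), 0],
    ![0, -(1 / (Real.sqrt 2 : ℂ)), 1 / (Real.sqrt 2 : ℂ), 0]]

/-- Bell projectors Φᵢ (indexed from 0: `Phi 0` is Φ₁, etc.) -/
def Phi (i : Fin 4) : Matrix (Fin 4) (Fin 4) ℂ := proj (Bell i)

/-- Separability of a two-qubit (4×4) matrix -/
def IsSepState (ρ : Matrix (Fin 4) (Fin 4) ℂ) : Prop :=
  ∃ (n : ℕ) (p : Fin n → ℝ) (ψ χ : Fin n → Fin 2 → ℂ),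
    (∀ i, 0 ≤ p i) ∧ (∑ i, p i = 1) ∧ (∀ i, unit2 (ψ i)) ∧ (∀ i, unit2 (χ i)) ∧
    ρ = ∑ i, (p i : ℂ) • proj (tens (ψ i) (χ i))

/-- Density matrix -/
def IsState (ρ : Matrix (Fin 4) (Fin 4) ℂ) : Prop := ρ.PosSemidef ∧ ρ.trace = 1

lemma trace_proj_mul_proj (u w : Fin 4 → ℂ) :
    (proj u * proj w).trace = (Complex.normSq (∑ j, star (u j) * w j) : ℂ) := by
  rw [← Complex.mul_conj]
  simp [proj, Matrix.trace, Matrix.mul_apply, Fin.sum_univ_four, Matrix.diag, map_add,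
    _root_.map_mul]
  ring

lemma trace_Phi_two_mul_proj (w : Fin 4 → ℂ) :
    (Phi 2 * proj w).trace = ((Complex.normSq (w 1 + w 2) / 2 : ℝ) : ℂ) := by
  have hinner : ∑ j, star (Bell 2 j) * w j = (1 / (Real.sqrt 2 : ℂ)) * (w 1 + w 2) := by
    simp [Bell, Fin.sum_univ_four]
    ring
  have hnormSq : Complex.normSq (1 / (Real.sqrt 2 : ℂ)) = 1 / 2 := by
    rw [Complex.normSq_div, Complex.normSq_ofReal, Real.mul_self_sqrt zero_le_two]
    simp
  rw [Phi, trace_proj_mul_proj, hinner, Complex.normSq_mul, hnormSq]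
  push_cast
  ring

lemma trace_Phi_two_mul_Phi_zero : (Phi 2 * Phi 0).trace = 0 := by
  change (Phi 2 * proj (Bell 0)).trace = 0
  rw [trace_Phi_two_mul_proj]
  simp [Bell]

lemma trace_Phi_two_mul_Phi_two : (Phi 2 * Phi 2).trace = 1 := by
  have hsum : Bell 2 1 + Bell 2 2 = ((2 / Real.sqrt 2 : ℝ) : ℂ) := by
    simp only [Bell, Matrix.cons_val_two, Matrix.tail_cons, Matrix.head_cons,
      Matrix.cons_val_one, Matrix.cons_val_zero]
    push_cast
    ring
  change (Phi 2 * proj (Bell 2)).trace = 1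
  rw [trace_Phi_two_mul_proj, hsum, Complex.normSq_ofReal, div_mul_div_comm,
    Real.mul_self_sqrt zero_le_two]
  norm_num

lemma normSq_tens_one_add_tens_two_le {ψ χ : Fin 2 → ℂ} (hψ : unit2 ψ) (hχ : unit2 χ) :
    Complex.normSq (tens ψ χ 1 + tens ψ χ 2) ≤ 1 := by
  simp only [unit2, Fin.sum_univ_two, Complex.normSq_eq_norm_sq] at hψ hχ
  simp only [tens, Matrix.cons_val_one, Matrix.head_cons, Matrix.cons_val_two,
    Matrix.tail_cons, Matrix.cons_val_zero, Complex.normSq_eq_norm_sq]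
  have htriangle : ‖ψ 0 * χ 1 + ψ 1 * χ 0‖ ≤ ‖ψ 0‖ * ‖χ 1‖ + ‖ψ 1‖ * ‖χ 0‖ := by
    simpa only [norm_mul] using norm_add_le (ψ 0 * χ 1) (ψ 1 * χ 0)
  nlinarith [norm_nonneg (ψ 0 * χ 1 + ψ 1 * χ 0), norm_nonneg (ψ 0), norm_nonneg (ψ 1),
    norm_nonneg (χ 0), norm_nonneg (χ 1), sq_nonneg (‖ψ 0‖ * ‖χ 0‖ - ‖ψ 1‖ * ‖χ 1‖)]

lemma re_trace_Phi_two_mul_proj_tens_le {ψ χ : Fin 2 → ℂ} (hψ : unit2 ψ) (hχ : unit2 χ) :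
    ((Phi 2 * proj (tens ψ χ)).trace).re ≤ 1 / 2 := by
  rw [trace_Phi_two_mul_proj, Complex.ofReal_re]
  linarith [normSq_tens_one_add_tens_two_le hψ hχ]

lemma IsSepState.re_trace_Phi_two_mul_le {σ : Matrix (Fin 4) (Fin 4) ℂ} (h : IsSepState σ) :
    ((Phi 2 * σ).trace).re ≤ 1 / 2 := by
  obtain ⟨n, p, ψ, χ, hp, hp_sum, hψ, hχ, rfl⟩ := h
  simp only [Matrix.mul_sum, Matrix.mul_smul, Matrix.trace_sum, Matrix.trace_smul,
    Complex.re_sum, smul_eq_mul, Complex.re_ofReal_mul]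
  calc ∑ i, p i * ((Phi 2 * proj (tens (ψ i) (χ i))).trace).re
      ≤ ∑ i, p i * (1 / 2) := Finset.sum_le_sum fun i _ =>
        mul_le_mul_of_nonneg_left (re_trace_Phi_two_mul_proj_tens_le (hψ i) (hχ i)) (hp i)
    _ = 1 / 2 := by rw [← Finset.sum_mul, hp_sum, one_mul]

lemma isSepState_proj_ket_one : IsSepState (proj (ket 1)) := by
  have htens : tens ![1, 0] ![0, 1] = ket 1 := by
    funext j
    fin_cases j <;> simp [tens, ket]
  refine ⟨1, ![1], ![![1, 0]], ![![0, 1]], ?_, ?_, ?_, ?_, ?_⟩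
  · simp
  · simp
  · simp [unit2]
  · simp [unit2]
  · simp [htens]

theorem trace_phi3_lower_bound_general
    (Λ : Matrix (Fin 4) (Fin 4) ℂ →ₗ[ℂ] Matrix (Fin 4) (Fin 4) ℂ)
    (hne : ∀ ρ, IsSepState ρ → IsSepState (Λ ρ))
    (l : ℝ) (hl : 1 / 2 < l) (hl1 : l ≤ 1)
    (heq : (l : ℂ) • Λ (Phi 0) + ((1 - l : ℝ) : ℂ) • Λ (proj (ket 1))
      = (l : ℂ) • Phi 0 + ((1 - l : ℝ) : ℂ) • Phi 2) :
    (1 - l) / (2 * l) ≤ ((Phi 2 * Λ (Phi 0)).trace).re := by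
  have hsep : ((Phi 2 * Λ (proj (ket 1))).trace).re ≤ 1 / 2 :=
    (hne _ isSepState_proj_ket_one).re_trace_Phi_two_mul_le
  have hoverlap := congrArg (fun M => ((Phi 2 * M).trace).re) heq
  simp only [Matrix.mul_add, Matrix.mul_smul, Matrix.trace_add, Matrix.trace_smul,
    trace_Phi_two_mul_Phi_zero, trace_Phi_two_mul_Phi_two, smul_eq_mul, mul_zero, mul_one,
    Complex.add_re, Complex.re_ofReal_mul, Complex.ofReal_re, Complex.zero_re] at hoverlap
  rw [div_le_iff₀ (by linarith)]
  nlinarith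

theorem trace_phi3_lower_bound
    (Λ : Matrix (Fin 4) (Fin 4) ℂ →ₗ[ℂ] Matrix (Fin 4) (Fin 4) ℂ)
    (htr : ∀ ρ, (Λ ρ).trace = ρ.trace)
    (hpos : ∀ ρ, ρ.PosSemidef → (Λ ρ).PosSemidef)
    (hne : ∀ ρ, IsSepState ρ → IsSepState (Λ ρ))
    (l : ℝ) (hl : 1 / 2 < l) (hl1 : l ≤ 1)
    (heq : (l : ℂ) • Λ (Phi 0) + ((1 - l : ℝ) : ℂ) • Λ (proj (ket 1))
      = (l : ℂ) • Phi 0 + ((1 - l : ℝ) : ℂ) • Phi 2) :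
    (1 - l) / (2 * l) ≤ ((Phi 2 * Λ (Phi 0)).trace).re :=
  trace_phi3_lower_bound_general Λ hne l hl hl1 heq
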